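/- arXiv:math/0702274 — 8 statements merged into one kernel-verified Lean document; each statement's English description precedes it below -/
import Mathlib

section
/- Let G be a group and H a normal subgroup of finite index N. If φ : G → ℝ is a homogeneous quasi-homomorphism such that the restriction of φ to H is a homomorphism, then φ(gh) = φ(g) + φ(h) for all g ∈ G and h ∈ H. -/
def QuasiHom {G : Type*} [Group G] (φ : G → ℝ) : Prop :=
  ∃ D : ℝ, ∀ x y : G, |φ (x * y) - φ x - φ y| ≤ D

def Homog {G : Type*} [Group G] (φ : G → ℝ) : Prop :=
  ∀ (g : G) (n : ℤ), φ (g ^ n) = (n : ℝ) * φ g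

def IsHomo {G : Type*} [Group G] (φ : G → ℝ) : Prop :=
  ∀ x y : G, φ (x * y) = φ x + φ y

lemma zero_of_bound (a D : ℝ) (h : ∀ n : ℕ, (n : ℝ) * |a| ≤ D) : a = 0 := by
  by_contra h0
  have habs : 0 < |a| := abs_pos.mpr h0
  obtain ⟨n, hn⟩ := exists_nat_gt (D / |a|)
  have := h n
  have : D < (n : ℝ) * |a| := (div_lt_iff₀ habs).mp hn
  linarith [h n]

lemma phi_inv {G : Type*} [Group G] (φ : G → ℝ) (hh : Homog φ) (x : G) :
    φ x⁻¹ = -φ x := by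
  have := hh x (-1)
  simpa using this

lemma phi_conj {G : Type*} [Group G] (φ : G → ℝ) (hq : QuasiHom φ) (hh : Homog φ)
    (x g : G) : φ (x * g * x⁻¹) = φ g := by
  obtain ⟨D, hD⟩ := hq
  have key : ∀ n : ℕ, (n : ℝ) * |φ (x * g * x⁻¹) - φ g| ≤ 2 * D := by
    intro n
    have h1 : (x * g * x⁻¹) ^ n = x * g ^ n * x⁻¹ := by
      rw [conj_pow]
    have h2 : φ ((x * g * x⁻¹) ^ n) = (n : ℝ) * φ (x * g * x⁻¹) := by
      have := hh (x * g * x⁻¹) (n : ℤ)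
      simpa using this
    have h3 : φ (g ^ n) = (n : ℝ) * φ g := by
      have := hh g (n : ℤ); simpa using this
    have e1 : |φ (x * (g ^ n * x⁻¹)) - φ x - φ (g ^ n * x⁻¹)| ≤ D := hD _ _
    have e2 : |φ (g ^ n * x⁻¹) - φ (g ^ n) - φ x⁻¹| ≤ D := hD _ _
    have hinv : φ x⁻¹ = -φ x := phi_inv φ hh x
    have hx : x * (g ^ n * x⁻¹) = (x * g * x⁻¹) ^ n := by
      rw [h1]; group
    rw [hx, h2] at e1
    rw [hinv, h3] at e2
    calc (n : ℝ) * |φ (x * g * x⁻¹) - φ g|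
        = |(n : ℝ) * φ (x * g * x⁻¹) - (n : ℝ) * φ g| := by
          rw [← mul_sub, abs_mul, Nat.abs_cast]
      _ ≤ D + D := by
          have := abs_sub_abs_le_abs_sub ((n : ℝ) * φ (x * g * x⁻¹)) ((n:ℝ) * φ g)
          calc |(n : ℝ) * φ (x * g * x⁻¹) - (n : ℝ) * φ g|
              = |((n:ℝ) * φ (x*g*x⁻¹) - φ x - φ (g ^ n * x⁻¹)) +
                (φ (g ^ n * x⁻¹) - (n:ℝ) * φ g - -φ x)| := by
                ring_nf
            _ ≤ |(n:ℝ) * φ (x*g*x⁻¹) - φ x - φ (g ^ n * x⁻¹)| +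
                |φ (g ^ n * x⁻¹) - (n:ℝ) * φ g - -φ x| := abs_add_le _ _
            _ ≤ D + D := add_le_add e1 e2
      _ = 2 * D := by ring
  have := zero_of_bound _ _ key
  linarith [this]

theorem stmt4 {G : Type*} [Group G] (H : Subgroup G) [H.Normal] [H.FiniteIndex]
    (φ : G → ℝ) (hq : QuasiHom φ) (hh : Homog φ)
    (hres : ∀ h₁ ∈ H, ∀ h₂ ∈ H, φ (h₁ * h₂) = φ h₁ + φ h₂) :
    ∀ g : G, ∀ h ∈ H, φ (g * h) = φ g + φ h := by
  intro g h hH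
  obtain ⟨D, hD⟩ := hq
  have hnorm : H.Normal := inferInstance
  -- (g*h)^n = g^n * c with c ∈ H and φ c = n * φ h
  have main : ∀ n : ℕ, ∃ c : G, c ∈ H ∧ (g * h) ^ n = g ^ n * c ∧ φ c = (n : ℝ) * φ h := by
    intro n
    induction n with
    | zero =>
        refine ⟨1, one_mem H, by simp, ?_⟩
        have := hh (1 : G) 0
        simpa using this
    | succ n ih =>
        obtain ⟨c, hc, hpow, hphi⟩ := ih
        set d := (g ^ n)⁻¹ * h * (g ^ n) with hd
        have hdH : d ∈ H := by
          have := hnorm.conj_mem h hH (g ^ n)⁻¹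
          simpa [hd] using this
        have hφd : φ d = φ h := by
          have := phi_conj φ ⟨D, hD⟩ hh (g ^ n)⁻¹ h
          simpa [hd] using this
        refine ⟨d * c, H.mul_mem hdH hc, ?_, ?_⟩
        · rw [pow_succ', hpow, hd]
          group
        · rw [hres d hdH c hc, hφd, hphi]
          push_cast; ring
  have key : ∀ n : ℕ, (n : ℝ) * |φ (g * h) - φ g - φ h| ≤ D := by
    intro n
    obtain ⟨c, hc, hpow, hphi⟩ := main n
    have e1 : |φ (g ^ n * c) - φ (g ^ n) - φ c| ≤ D := hD _ _
    have h2 : φ ((g * h) ^ n) = (n : ℝ) * φ (g * h) := by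
      have := hh (g * h) (n : ℤ); simpa using this
    have h3 : φ (g ^ n) = (n : ℝ) * φ g := by
      have := hh g (n : ℤ); simpa using this
    rw [← hpow, h2, h3, hphi] at e1
    calc (n : ℝ) * |φ (g * h) - φ g - φ h|
        = |(n:ℝ) * φ (g*h) - (n:ℝ) * φ g - (n:ℝ) * φ h| := by
          rw [show (n:ℝ) * φ (g*h) - (n:ℝ) * φ g - (n:ℝ) * φ h
              = (n:ℝ) * (φ (g*h) - φ g - φ h) by ring, abs_mul, Nat.abs_cast]
      _ ≤ D := e1
  have := zero_of_bound _ _ key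
  linarith [this]
end

section
/- Let G be a group and H a finite index subgroup. If every homogeneous quasi-homomorphism H → ℝ is a homomorphism, and every homogeneous quasi-homomorphism on any virtually abelian group is a homomorphism, then every homogeneous quasi-homomorphism G → ℝ is a homomorphism. (Lemma on injectivity of the restriction map QH~(G) → QH~(H).) -/
/-!
Let `N` be the normal core of `H`. A homogeneous quasi-homomorphism `φ` is conjugation invariant,
and by hypothesis it is additive on `N`; hence its zero set `N₀` in `N` is a normal subgroup of `G`
containing all commutators of `N`. Since `(g m)ⁿ` and `gⁿ` differ by an element of `N₀`,
`|φ ((g m)ⁿ) - φ (gⁿ)|` is bounded uniformly in `n`, so `φ` is constant on the cosets of `N₀`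
and descends to a homogeneous quasi-homomorphism of `G ⧸ N₀`. That group is virtually abelian
(the image of `N` is abelian of finite index), so the descended map is additive, and therefore
so is `φ`.
-/

variable {G Q : Type*} [Group G] [Group Q]

section Comp

variable {ψ : Q → ℝ} {f : G →* Q}

lemma QuasiHom.comp (hψ : QuasiHom ψ) (f : G →* Q) : QuasiHom (ψ ∘ f) := by
  obtain ⟨D, hD⟩ := hψ
  exact ⟨D, fun x y => by simpa using hD (f x) (f y)⟩

lemma Homog.comp (hψ : Homog ψ) (f : G →* Q) : Homog (ψ ∘ f) :=
  fun g n => by simpa using hψ (f g) n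

lemma IsHomo.comp (hψ : IsHomo ψ) (f : G →* Q) : IsHomo (ψ ∘ f) :=
  fun x y => by simpa using hψ (f x) (f y)

lemma QuasiHom.of_comp (hf : Function.Surjective f) (h : QuasiHom (ψ ∘ f)) : QuasiHom ψ := by
  obtain ⟨D, hD⟩ := h
  exact ⟨D, hf.forall₂.2 fun x y => by simpa using hD x y⟩

lemma Homog.of_comp (hf : Function.Surjective f) (h : Homog (ψ ∘ f)) : Homog ψ :=
  hf.forall.2 fun g n => by simpa using h g n

end Comp

namespace Homog

variable {φ : G → ℝ}

lemma map_pow (hφ : Homog φ) (g : G) (n : ℕ) : φ (g ^ n) = n * φ g := by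
  simpa using hφ g n

lemma map_inv (hφ : Homog φ) (g : G) : φ g⁻¹ = -φ g := by
  simpa using hφ g (-1)

lemma eq_of_forall_abs_sub_map_pow_le (hφ : Homog φ) {a b : G} {C : ℝ}
    (h : ∀ n : ℕ, |φ (a ^ n) - φ (b ^ n)| ≤ C) : φ a = φ b := by
  by_contra hne
  have hpos : 0 < |φ a - φ b| := abs_pos.2 (sub_ne_zero.2 hne)
  obtain ⟨n, hn⟩ := exists_nat_gt (C / |φ a - φ b|)
  have hle := h n
  rw [hφ.map_pow, hφ.map_pow, ← mul_sub, abs_mul, Nat.abs_cast] at hle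
  exact hle.not_gt ((div_lt_iff₀ hpos).1 hn)

lemma map_conj (hq : QuasiHom φ) (hφ : Homog φ) (g x : G) : φ (g * x * g⁻¹) = φ x := by
  obtain ⟨D, hD⟩ := hq
  refine hφ.eq_of_forall_abs_sub_map_pow_le (C := D + D) fun n => ?_
  have h₁ := hD (g * x ^ n) g⁻¹
  have h₂ := hD g (x ^ n)
  rw [hφ.map_inv] at h₁
  rw [conj_pow]
  calc |φ (g * x ^ n * g⁻¹) - φ (x ^ n)|
      = |(φ (g * x ^ n * g⁻¹) - φ (g * x ^ n) - -φ g) + (φ (g * x ^ n) - φ g - φ (x ^ n))| := by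
        ring_nf
    _ ≤ D + D := (abs_add_le _ _).trans (add_le_add h₁ h₂)

lemma map_mul_of_mem {K : Subgroup G} [K.Normal] (hq : QuasiHom φ) (hφ : Homog φ)
    (hK : ∀ m ∈ K, φ m = 0) (g : G) {m : G} (hm : m ∈ K) : φ (g * m) = φ g := by
  obtain ⟨D, hD⟩ := hq
  refine hφ.eq_of_forall_abs_sub_map_pow_le (C := D) fun n => ?_
  have hdiff : (g ^ n)⁻¹ * (g * m) ^ n ∈ K := by
    rw [← QuotientGroup.eq, QuotientGroup.mk_pow, QuotientGroup.mk_pow,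
      QuotientGroup.mk_mul_of_mem g hm]
  simpa [hK _ hdiff] using hD (g ^ n) ((g ^ n)⁻¹ * (g * m) ^ n)

end Homog

section KerOn

variable {φ : G → ℝ} {N : Subgroup G} (hN : ∀ a ∈ N, ∀ b ∈ N, φ (a * b) = φ a + φ b)
include hN

lemma map_one_of_forall_mem_add : φ 1 = 0 := by
  simpa using hN 1 N.one_mem 1 N.one_mem

def kerOn : Subgroup G where
  carrier := {g | g ∈ N ∧ φ g = 0}
  one_mem' := ⟨N.one_mem, map_one_of_forall_mem_add hN⟩
  mul_mem' ha hb := ⟨N.mul_mem ha.1 hb.1, by rw [hN _ ha.1 _ hb.1, ha.2, hb.2, add_zero]⟩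
  inv_mem' {a} ha := ⟨N.inv_mem ha.1, by
    have h := hN a⁻¹ (N.inv_mem ha.1) a ha.1
    rw [inv_mul_cancel, map_one_of_forall_mem_add hN, ha.2] at h
    linarith⟩

lemma mem_kerOn {g : G} : g ∈ kerOn hN ↔ g ∈ N ∧ φ g = 0 := Iff.rfl

lemma kerOn_normal [N.Normal] (hq : QuasiHom φ) (hφ : Homog φ) : (kerOn hN).Normal :=
  ⟨fun n hn g => ⟨‹N.Normal›.conj_mem n hn.1 g, by rw [hφ.map_conj hq]; exact hn.2⟩⟩

lemma inv_mul_inv_mul_mul_mem_kerOn {a b : G} (ha : a ∈ N) (hb : b ∈ N) :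
    a⁻¹ * b⁻¹ * a * b ∈ kerOn hN := by
  have hx : a⁻¹ * b⁻¹ ∈ N := N.mul_mem (N.inv_mem ha) (N.inv_mem hb)
  have hcancel := hN _ hx _ (N.mul_mem hb ha)
  rw [show a⁻¹ * b⁻¹ * (b * a) = 1 by group, map_one_of_forall_mem_add hN, hN b hb a ha] at hcancel
  refine ⟨N.mul_mem (N.mul_mem hx ha) hb, ?_⟩
  rw [hN _ (N.mul_mem hx ha) _ hb, hN _ hx _ ha]
  linarith

end KerOn

lemma exists_comm_finiteIndex_of_commutators_mem {K N : Subgroup G} [K.Normal] [N.FiniteIndex]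
    (hK : ∀ a ∈ N, ∀ b ∈ N, a⁻¹ * b⁻¹ * a * b ∈ K) :
    ∃ A : Subgroup (G ⧸ K), A.FiniteIndex ∧ ∀ a ∈ A, ∀ b ∈ A, a * b = b * a := by
  let π := QuotientGroup.mk' K
  refine ⟨N.map π, ⟨fun h => N.index_ne_zero_of_finite ?_⟩, ?_⟩
  · exact Nat.eq_zero_of_zero_dvd (h ▸ N.index_map_dvd (QuotientGroup.mk'_surjective K))
  · rintro _ ⟨a, ha, rfl⟩ _ ⟨b, hb, rfl⟩
    rw [← map_mul, ← map_mul, QuotientGroup.mk'_apply, QuotientGroup.mk'_apply, QuotientGroup.eq]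
    simpa [mul_assoc] using hK b hb a ha

lemma exists_comp_mk'_eq {K : Subgroup G} [K.Normal] (φ : G → ℝ)
    (h : ∀ g, ∀ m ∈ K, φ (g * m) = φ g) : ∃ ψ : G ⧸ K → ℝ, ψ ∘ QuotientGroup.mk' K = φ :=
  ⟨fun x => Quotient.liftOn' x φ fun a b hab => by
    rw [QuotientGroup.leftRel_apply] at hab
    rw [← h a _ hab, mul_inv_cancel_left], rfl⟩

theorem stmt5 {G : Type u} [Group G] (H : Subgroup G) [H.FiniteIndex]
    (hH : ∀ ψ : H → ℝ, QuasiHom ψ → Homog ψ → IsHomo ψ)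
    (hVA : ∀ (K : Type u) [Group K],
      (∃ A : Subgroup K, A.FiniteIndex ∧ ∀ a ∈ A, ∀ b ∈ A, a * b = b * a) →
      ∀ ψ : K → ℝ, QuasiHom ψ → Homog ψ → IsHomo ψ) :
    ∀ φ : G → ℝ, QuasiHom φ → Homog φ → IsHomo φ := by
  intro φ hq hφ
  have hadd : ∀ a ∈ H.normalCore, ∀ b ∈ H.normalCore, φ (a * b) = φ a + φ b :=
    fun a ha b hb => hH _ (hq.comp H.subtype) (hφ.comp H.subtype)
      ⟨a, H.normalCore_le ha⟩ ⟨b, H.normalCore_le hb⟩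
  have := kerOn_normal hadd hq hφ
  obtain ⟨ψ, hψ⟩ := exists_comp_mk'_eq (K := kerOn hadd) φ
    fun g _ hm => hφ.map_mul_of_mem hq (fun _ hm => ((mem_kerOn hadd).1 hm).2) g hm
  have hsurj := QuotientGroup.mk'_surjective (kerOn hadd)
  have hvirt := exists_comm_finiteIndex_of_commutators_mem
    fun _ ha _ hb => inv_mul_inv_mul_mul_mem_kerOn hadd ha hb
  rw [← hψ] at hq hφ ⊢
  exact (hVA _ hvirt ψ (hq.of_comp hsurj) (hφ.of_comp hsurj)).comp _
end

section
/- Let 1 → H → G → Σ → 1 be exact with Σ finite of order N, and let φ : H → ℝ be a homogeneous quasi-homomorphism which is invariant under conjugation by all elements of G (φ(g⁻¹hg) = φ(h) for g ∈ G, h ∈ H). Then the function φ~ : G → ℝ defined by φ~(g) = φ(g^N)/N is a quasi-homomorphism extending φ. -/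
section

variable {G : Type*} [Group G] {H : Subgroup G} [H.Normal] {φ : G → ℝ} {D : ℝ}

theorem exists_mul_pow_succ_eq_pow_mul
    (hD : ∀ h₁ ∈ H, ∀ h₂ ∈ H, |φ (h₁ * h₂) - φ h₁ - φ h₂| ≤ D)
    (hinv : ∀ g : G, ∀ h ∈ H, φ (g⁻¹ * h * g) = φ h) (a : G) {h : G} (hh : h ∈ H) (n : ℕ) :
    ∃ c ∈ H, (a * h) ^ (n + 1) = a ^ (n + 1) * c ∧ |φ c - (n + 1) * φ h| ≤ n * D := by
  induction n with
  | zero => exact ⟨h, hh, by simp, by simp⟩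
  | succ n ih =>
    obtain ⟨c, hc, hpow, hbound⟩ := ih
    have hc' : a⁻¹ * c * a ∈ H := ‹H.Normal›.conj_mem' c hc a
    refine ⟨a⁻¹ * c * a * h, H.mul_mem hc' hh, ?_, ?_⟩
    · rw [pow_succ, hpow]
      group
    · have hstep := hD _ hc' h hh
      rw [hinv a c hc] at hstep
      push_cast
      rw [abs_le] at hstep hbound ⊢
      constructor <;> linarith [hstep.1, hstep.2, hbound.1, hbound.2]

theorem abs_pow_div_mul_sub_le
    (hD : ∀ h₁ ∈ H, ∀ h₂ ∈ H, |φ (h₁ * h₂) - φ h₁ - φ h₂| ≤ D)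
    (hinv : ∀ g : G, ∀ h ∈ H, φ (g⁻¹ * h * g) = φ h) {N : ℕ} (hN : 0 < N) {a : G}
    (ha : a ^ N ∈ H) {h : G} (hh : h ∈ H) :
    |φ ((a * h) ^ N) / N - φ (a ^ N) / N - φ h| ≤ D := by
  obtain ⟨m, rfl⟩ : ∃ m, N = m + 1 := ⟨N - 1, by omega⟩
  obtain ⟨c, hc, hpow, hbound⟩ := exists_mul_pow_succ_eq_pow_mul hD hinv a hh m
  have hprod := hD _ ha c hc
  have hN' : (0 : ℝ) < (m + 1 : ℕ) := by positivity
  have hsplit : φ ((a * h) ^ (m + 1)) / (m + 1 : ℕ) - φ (a ^ (m + 1)) / (m + 1 : ℕ) - φ h =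
      ((φ (a ^ (m + 1) * c) - φ (a ^ (m + 1)) - φ c) + (φ c - (m + 1) * φ h)) / (m + 1 : ℕ) := by
    rw [hpow]
    field_simp
    push_cast
    ring
  rw [hsplit, abs_div, abs_of_pos hN', div_le_iff₀ hN']
  push_cast
  calc _ ≤ |φ (a ^ (m + 1) * c) - φ (a ^ (m + 1)) - φ c| + |φ c - (m + 1) * φ h| :=
        abs_add_le _ _
    _ ≤ D + m * D := add_le_add hprod hbound
    _ = D * (m + 1) := by ring

end

theorem quasiHom_of_abs_mul_sub_le {G : Type*} [Group G] {H : Subgroup G} [H.Normal]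
    [H.FiniteIndex] {ψ : G → ℝ} {D : ℝ} (hinv : ∀ g : G, ∀ h ∈ H, ψ (g⁻¹ * h * g) = ψ h)
    (hD : ∀ a : G, ∀ h ∈ H, |ψ (a * h) - ψ a - ψ h| ≤ D) : QuasiHom ψ := by
  obtain ⟨M, hM⟩ := Finite.exists_le
    (fun p : (G ⧸ H) × (G ⧸ H) => |ψ (p.1.out * p.2.out) - ψ p.1.out - ψ p.2.out|)
  refine ⟨M + 4 * D, fun x y => ?_⟩
  set a := (x : G ⧸ H).out
  set b := (y : G ⧸ H).out
  have hx : a⁻¹ * x ∈ H := QuotientGroup.eq.mp (QuotientGroup.out_eq' (x : G ⧸ H))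
  have hy : b⁻¹ * y ∈ H := QuotientGroup.eq.mp (QuotientGroup.out_eq' (y : G ⧸ H))
  have hk : b⁻¹ * (a⁻¹ * x) * b ∈ H := ‹H.Normal›.conj_mem' _ hx b
  have hxy : x * y = a * b * (b⁻¹ * (a⁻¹ * x) * b * (b⁻¹ * y)) := by group
  have hrep := hM ((x : G ⧸ H), (y : G ⧸ H))
  have hdxy := hD (a * b) _ (H.mul_mem hk hy)
  have hdk := hD (b⁻¹ * (a⁻¹ * x) * b) (b⁻¹ * y) hy
  have hdx := hD a _ hx
  have hdy := hD b _ hy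
  rw [← hxy] at hdxy
  rw [hinv b _ hx] at hdk
  simp only [mul_inv_cancel_left] at hdk hdx hdy
  rw [abs_le] at hrep hdxy hdk hdx hdy ⊢
  constructor <;> linarith [hrep.1, hrep.2, hdxy.1, hdxy.2, hdk.1, hdk.2, hdx.1, hdx.2, hdy.1, hdy.2]

theorem stmt6_general {G : Type*} [Group G] (H : Subgroup G) [H.Normal]
    (N : ℕ) (hN : H.index = N) (hN0 : 0 < N)
    (φ : G → ℝ)
    (hdef : ∃ D : ℝ, ∀ h₁ ∈ H, ∀ h₂ ∈ H, |φ (h₁ * h₂) - φ h₁ - φ h₂| ≤ D)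
    (hhom : ∀ h ∈ H, ∀ n : ℤ, φ (h ^ n) = (n : ℝ) * φ h)
    (hinv : ∀ g : G, ∀ h ∈ H, φ (g⁻¹ * h * g) = φ h) :
    QuasiHom (fun g : G => φ (g ^ N) / N) ∧
    ∀ h ∈ H, φ (h ^ N) / N = φ h := by
  have : H.FiniteIndex := ⟨by omega⟩
  obtain ⟨D, hD⟩ := hdef
  have hpow : ∀ g : G, g ^ N ∈ H := fun g => hN ▸ H.pow_index_mem g
  have hext : ∀ h ∈ H, φ (h ^ N) / N = φ h := fun h hh => by
    rw [← zpow_natCast, hhom h hh, Int.cast_natCast]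
    field_simp
  refine ⟨quasiHom_of_abs_mul_sub_le (H := H) (D := D) (fun g h hh => ?_) (fun a h hh => ?_), hext⟩
  · rw [hext _ (‹H.Normal›.conj_mem' h hh g), hext h hh, hinv g h hh]
  · rw [hext h hh]
    exact abs_pow_div_mul_sub_le hD hinv hN0 (hpow a) hh

theorem stmt6 {G : Type*} [Group G] (H : Subgroup G) [H.Normal]
    (N : ℕ) (hN : H.index = N) (hN0 : 0 < N)
    (hpow : ∀ g : G, g ^ N ∈ H)
    (φ : G → ℝ)
    (hdef : ∃ D : ℝ, ∀ h₁ ∈ H, ∀ h₂ ∈ H, |φ (h₁ * h₂) - φ h₁ - φ h₂| ≤ D)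
    (hhom : ∀ h ∈ H, ∀ n : ℤ, φ (h ^ n) = (n : ℝ) * φ h)
    (hinv : ∀ g : G, ∀ h ∈ H, φ (g⁻¹ * h * g) = φ h) :
    QuasiHom (fun g : G => φ (g ^ N) / N) ∧
    ∀ h ∈ H, φ (h ^ N) / N = φ h :=
  stmt6_general H N hN hN0 φ hdef hhom hinv
end

section
/- If Γ₁ and Γ₂ are groups, then the space of homogeneous quasi-homomorphisms on Γ₁ × Γ₂ is isomorphic (as a real vector space) to the direct sum of the spaces of homogeneous quasi-homomorphisms on Γ₁ and on Γ₂, via φ ↦ (φ restricted to Γ₁ × {1}, φ restricted to {1} × Γ₂). -/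
lemma qh_pow_nat {G : Type*} [Group G] (φ : G → ℝ) (hh : Homog φ) (g : G) (n : ℕ) :
    φ (g ^ n) = (n : ℝ) * φ g := by
  have := hh g (n : ℤ)
  rwa [zpow_natCast, Int.cast_natCast] at this

lemma comm_add {G : Type*} [Group G] (φ : G → ℝ) (hq : QuasiHom φ) (hh : Homog φ)
    {x y : G} (h : Commute x y) : φ (x * y) = φ x + φ y := by
  obtain ⟨D, hD⟩ := hq
  set c := φ (x * y) - φ x - φ y with hc
  have key : ∀ n : ℕ, (n : ℝ) * |c| ≤ D := by
    intro n
    have h2 := hD (x ^ n) (y ^ n)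
    rw [← Commute.mul_pow h n, qh_pow_nat φ hh, qh_pow_nat φ hh, qh_pow_nat φ hh] at h2
    calc (n : ℝ) * |c| = |(n : ℝ) * c| := by
          rw [abs_mul, abs_of_nonneg (by positivity : (0:ℝ) ≤ (n:ℝ))]
      _ ≤ D := by rw [hc]; ring_nf; ring_nf at h2; exact h2
  have hc0 : |c| = 0 := by
    by_contra hne
    have hpos : 0 < |c| := lt_of_le_of_ne (abs_nonneg c) (Ne.symm hne)
    obtain ⟨n, hn⟩ := exists_nat_gt (D / |c|)
    have : D < (n : ℝ) * |c| := by
      rw [div_lt_iff₀ hpos] at hn; linarith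
    exact absurd (key n) (not_le.mpr this)
  have : c = 0 := abs_eq_zero.mp hc0
  rw [hc] at this; linarith

lemma homog_one {G : Type*} [Group G] (φ : G → ℝ) (hh : Homog φ) : φ 1 = 0 := by
  have := hh 1 0
  simpa using this

theorem stmt7 {Γ₁ Γ₂ : Type*} [Group Γ₁] [Group Γ₂] :
    (∀ φ : Γ₁ × Γ₂ → ℝ, QuasiHom φ → Homog φ →
      (QuasiHom (fun a : Γ₁ => φ (a, 1)) ∧ Homog (fun a : Γ₁ => φ (a, 1))) ∧
      (QuasiHom (fun b : Γ₂ => φ (1, b)) ∧ Homog (fun b : Γ₂ => φ (1, b)))) ∧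
    (∀ φ ψ : Γ₁ × Γ₂ → ℝ, QuasiHom φ → Homog φ → QuasiHom ψ → Homog ψ →
      (∀ a : Γ₁, φ (a, 1) = ψ (a, 1)) → (∀ b : Γ₂, φ (1, b) = ψ (1, b)) → φ = ψ) ∧
    (∀ (φ₁ : Γ₁ → ℝ) (φ₂ : Γ₂ → ℝ), QuasiHom φ₁ → Homog φ₁ → QuasiHom φ₂ → Homog φ₂ →
      ∃ φ : Γ₁ × Γ₂ → ℝ, QuasiHom φ ∧ Homog φ ∧
        (∀ a : Γ₁, φ (a, 1) = φ₁ a) ∧ (∀ b : Γ₂, φ (1, b) = φ₂ b)) := by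
  have split : ∀ φ : Γ₁ × Γ₂ → ℝ, QuasiHom φ → Homog φ → ∀ (a : Γ₁) (b : Γ₂),
      φ (a, b) = φ (a, 1) + φ (1, b) := by
    intro φ hq hh a b
    have hcomm : Commute ((a, 1) : Γ₁ × Γ₂) ((1, b) : Γ₁ × Γ₂) := by
      simp [Commute, SemiconjBy, Prod.ext_iff]
    have := comm_add φ hq hh hcomm
    simpa [Prod.mul_def] using this
  refine ⟨?_, ?_, ?_⟩
  · intro φ hq hh
    obtain ⟨D, hD⟩ := hq
    refine ⟨⟨⟨D, fun x y => ?_⟩, fun g n => ?_⟩, ⟨D, fun x y => ?_⟩, fun g n => ?_⟩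
    · have := hD (x, 1) (y, 1); simpa [Prod.mul_def] using this
    · have := hh (g, 1) n; simpa [Prod.pow_def] using this
    · have := hD (1, x) (1, y); simpa [Prod.mul_def] using this
    · have := hh (1, g) n; simpa [Prod.pow_def] using this
  · intro φ ψ hqφ hhφ hqψ hhψ h1 h2
    funext p
    obtain ⟨a, b⟩ := p
    rw [split φ hqφ hhφ a b, split ψ hqψ hhψ a b, h1, h2]
  · intro φ₁ φ₂ hq1 hh1 hq2 hh2
    obtain ⟨D₁, hD₁⟩ := hq1
    obtain ⟨D₂, hD₂⟩ := hq2
    refine ⟨fun p => φ₁ p.1 + φ₂ p.2, ⟨D₁ + D₂, fun x y => ?_⟩, fun g n => ?_, fun a => ?_, fun b => ?_⟩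
    · have h1 := hD₁ x.1 y.1
      have h2 := hD₂ x.2 y.2
      simp only [Prod.fst_mul, Prod.snd_mul]
      have heq : φ₁ (x.1 * y.1) + φ₂ (x.2 * y.2) - (φ₁ x.1 + φ₂ x.2) - (φ₁ y.1 + φ₂ y.2)
          = (φ₁ (x.1 * y.1) - φ₁ x.1 - φ₁ y.1) + (φ₂ (x.2 * y.2) - φ₂ x.2 - φ₂ y.2) := by ring
      rw [heq]
      exact (abs_add_le _ _).trans (add_le_add h1 h2)
    · show φ₁ (g ^ n).1 + φ₂ (g ^ n).2 = (n : ℝ) * (φ₁ g.1 + φ₂ g.2)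
      have h1 : (g ^ n).1 = g.1 ^ n := rfl
      have h2 : (g ^ n).2 = g.2 ^ n := rfl
      rw [h1, h2, hh1, hh2]; ring
    · simp [homog_one φ₂ hh2]
    · simp [homog_one φ₁ hh1]
end

section
/- In a geodesic metric space, suppose [x,y] and [u,v] are geodesic segments such that u is a nearest point of [u,v] to x, v is a nearest point of [u,v] to y, and the distance between the sets [x,y] and [u,v] is larger than d(u,v). Then [x,y] is contained in the union of 5 open balls each disjoint from [u,v]. -/
/-! Parametrize `[x,y]` by arc length `t ∈ [0, L]` from `x`. Points with `t < d(x,u)` lie in the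
ball about `x` of radius `d(x,u)`, which misses `[u,v]` because `u` is a nearest point to `x`;
symmetrically near `y`. By the triangle inequality `L ≤ d(x,u) + d(u,v) + d(v,y)`, so the remaining
points form a subsegment of length at most `d(u,v) < d([x,y],[u,v])`, which lies in a ball
about one of its points that still misses `[u,v]`. Three balls suffice; the other two repeat one. -/

def GeodSeg {X : Type*} [MetricSpace X] (s : Set X) (a b : X) : Prop :=
  ∃ f : ℝ → X, f 0 = a ∧ f (dist a b) = b ∧
    (∀ u ∈ Set.Icc (0:ℝ) (dist a b), ∀ v ∈ Set.Icc (0:ℝ) (dist a b),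
      dist (f u) (f v) = |u - v|) ∧
    s = f '' Set.Icc (0:ℝ) (dist a b)

def projSet {X : Type*} [MetricSpace X] (s : Set X) (x : X) : Set X :=
  {p | p ∈ s ∧ ∀ q ∈ s, dist x p ≤ dist x q}

def setProj {X : Type*} [MetricSpace X] (s K : Set X) : Set X :=
  ⋃ x ∈ K, projSet s x

def AxiomDD (X : Type*) [MetricSpace X] (C : ℝ) : Prop :=
  ∀ (s : Set X) (a b : X), GeodSeg s a b →
    ∀ x x' p p' : X, p ∈ projSet s x → p' ∈ projSet s x' → dist p p' < dist x x' + C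

def Contracting {X : Type*} [MetricSpace X] (B : ℝ) (s : Set X) : Prop :=
  ∀ (z : X) (r : ℝ), Metric.ball z r ∩ s = ∅ →
    Metric.diam (setProj s (Metric.ball z r)) < B

open Metric Set

section

variable {X : Type*} [MetricSpace X]

theorem ball_inter_eq_empty_of_forall_le_dist {s : Set X} {z : X} {r : ℝ}
    (h : ∀ q ∈ s, r ≤ dist z q) : ball z r ∩ s = ∅ :=
  eq_empty_iff_forall_notMem.2 fun q ⟨hq, hqs⟩ => (h q hqs).not_gt (mem_ball'.1 hq)

theorem ball_inter_eq_empty_of_mem_projSet {s : Set X} {z p : X} (hp : p ∈ projSet s z) :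
    ball z (dist z p) ∩ s = ∅ :=
  ball_inter_eq_empty_of_forall_le_dist hp.2

theorem GeodSeg.subset_union_three_balls {s : Set X} {x y : X} (hs : GeodSeg s x y)
    {a b c r : ℝ} (ha : 0 ≤ a) (hlen : dist x y ≤ a + c + b) (hcr : c < r) :
    ∃ m ∈ s, s ⊆ ball x a ∪ ball y b ∪ ball m r := by
  obtain ⟨f, hf0, hfL, hfiso, rfl⟩ := hs
  set L := dist x y
  have hL : 0 ≤ L := dist_nonneg
  refine ⟨f (min a L), mem_image_of_mem f ⟨le_min ha hL, min_le_right a L⟩, ?_⟩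
  rintro _ ⟨t, ht, rfl⟩
  by_cases hta : t < a
  · left; left
    have hdist : dist (f t) (f 0) = |t - 0| := hfiso t ht 0 ⟨le_rfl, hL⟩
    rw [hf0, sub_zero, abs_of_nonneg ht.1] at hdist
    rwa [mem_ball, hdist]
  by_cases htb : L - t < b
  · left; right
    have hdist : dist (f t) (f L) = |t - L| := hfiso t ht L ⟨hL, le_rfl⟩
    rw [hfL, abs_sub_comm, abs_of_nonneg (sub_nonneg.2 ht.2)] at hdist
    rwa [mem_ball, hdist]
  · right
    push Not at hta htb
    have haL : min a L = a := min_eq_left (hta.trans ht.2)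
    have hdist : dist (f t) (f a) = |t - a| := hfiso t ht a ⟨ha, hta.trans ht.2⟩
    rw [abs_of_nonneg (sub_nonneg.2 hta)] at hdist
    rw [mem_ball, haL, hdist]
    linarith

end

theorem stmt10_general {X : Type*} [MetricSpace X] (sxy suv : Set X) (x y u v : X)
    (hxy : GeodSeg sxy x y)
    (hu : u ∈ projSet suv x) (hv : v ∈ projSet suv y)
    (p₀ q₀ : X)
    (hmin : ∀ p ∈ sxy, ∀ q ∈ suv, dist p₀ q₀ ≤ dist p q)
    (hgt : dist u v < dist p₀ q₀) :
    ∃ (c : Fin 5 → X) (r : Fin 5 → ℝ),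
      (∀ i, Metric.ball (c i) (r i) ∩ suv = ∅) ∧
      sxy ⊆ ⋃ i, Metric.ball (c i) (r i) := by
  have hlen : dist x y ≤ dist x u + dist u v + dist y v := by
    simpa only [dist_comm v y] using dist_triangle4 x u v y
  obtain ⟨m, hm, hcover⟩ := hxy.subset_union_three_balls dist_nonneg hlen hgt
  have hx := ball_inter_eq_empty_of_mem_projSet hu
  have hy := ball_inter_eq_empty_of_mem_projSet hv
  have hmid := ball_inter_eq_empty_of_forall_le_dist (hmin m hm)
  refine ⟨![x, y, m, m, m], ![dist x u, dist y v, dist p₀ q₀, dist p₀ q₀, dist p₀ q₀], ?_, ?_⟩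
  · intro i
    fin_cases i <;> assumption
  · intro p hp
    rcases hcover hp with (h | h) | h
    · exact mem_iUnion.2 ⟨0, h⟩
    · exact mem_iUnion.2 ⟨1, h⟩
    · exact mem_iUnion.2 ⟨2, h⟩

theorem stmt10 {X : Type*} [MetricSpace X] (sxy suv : Set X) (x y u v : X)
    (hxy : GeodSeg sxy x y) (huv : GeodSeg suv u v)
    (hu : u ∈ projSet suv x) (hv : v ∈ projSet suv y)
    (p₀ q₀ : X) (hp₀ : p₀ ∈ sxy) (hq₀ : q₀ ∈ suv)
    (hmin : ∀ p ∈ sxy, ∀ q ∈ suv, dist p₀ q₀ ≤ dist p q)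
    (hgt : dist u v < dist p₀ q₀) :
    ∃ (c : Fin 5 → X) (r : Fin 5 → ℝ),
      (∀ i, Metric.ball (c i) (r i) ∩ suv = ∅) ∧
      sxy ⊆ ⋃ i, Metric.ball (c i) (r i) :=
  stmt10_general sxy suv x y u v hxy hu hv p₀ q₀ hmin hgt
end

section
/- (Thin Triangles) Let [a,b] be a B-contracting geodesic segment in a geodesic metric space satisfying axiom (DD) with constant C, and suppose b is a nearest point of [a,b] to c. Then the distance from b to any geodesic segment [a,c] is less than 3B + C + 1. -/
theorem stmt12 {X : Type*} [MetricSpace X] (B C : ℝ) (hC : 0 < C)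
    (hDD : AxiomDD X C) (s : Set X) (a b c : X)
    (hs : GeodSeg s a b) (hB : Contracting B s) (hb : b ∈ projSet s c) :
    ∀ t : Set X, GeodSeg t a c → Metric.infDist b t < 3 * B + C + 1 := by
  intro t ht
  by_contra hcon
  push_neg at hcon
  -- hcon : 3 * B + C + 1 ≤ Metric.infDist b t
  obtain ⟨f, hf0, hfL, hfiso, hfim⟩ := hs
  obtain ⟨g, hg0, hgL, hgiso, hgim⟩ := ht
  -- B is positive
  have hB0 : 0 < B := by
    have h1 : Metric.ball c 0 ∩ s = ∅ := by
      rw [Metric.ball_zero]; exact Set.empty_inter s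
    have h2 := hB c 0 h1
    have h3 : setProj s (Metric.ball c 0) = ∅ := by
      rw [Metric.ball_zero]; simp [setProj]
    rwa [h3, Metric.diam_empty] at h2
  -- s is compact
  have hfcont : ContinuousOn f (Set.Icc 0 (dist a b)) := by
    apply LipschitzOnWith.continuousOn (K := 1)
    rw [lipschitzOnWith_iff_dist_le_mul]
    intro u hu v hv
    rw [hfiso u hu v hv, Real.dist_eq]
    simp
  have hscomp : IsCompact s := by
    rw [hfim]
    exact isCompact_Icc.image_of_continuousOn hfcont
  have hsbdd : Bornology.IsBounded s := hscomp.isBounded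
  have hasmem : a ∈ s := by
    rw [hfim]
    exact ⟨0, ⟨le_rfl, dist_nonneg⟩, hf0⟩
  -- projections exist
  have hproj_ex : ∀ z : X, ∃ p, p ∈ projSet s z := by
    intro z
    obtain ⟨p, hps, hpd⟩ := hscomp.exists_infDist_eq_dist ⟨a, hasmem⟩ z
    refine ⟨p, hps, fun q hq => ?_⟩
    rw [← hpd]
    exact Metric.infDist_le_dist_of_mem hq
  have hsetProj_sub : ∀ K : Set X, setProj s K ⊆ s := by
    intro K z hz
    simp only [setProj, Set.mem_iUnion] at hz
    obtain ⟨w, hw, hz2⟩ := hz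
    exact hz2.1
  -- a and c lie on t, hence are far from b
  have hat : a ∈ t := by
    rw [hgim]; exact ⟨0, ⟨le_rfl, dist_nonneg⟩, hg0⟩
  have hct : c ∈ t := by
    rw [hgim]; exact ⟨dist a c, ⟨dist_nonneg, le_rfl⟩, hgL⟩
  have hlab : 3 * B + C + 1 ≤ dist a b := by
    have h := Metric.infDist_le_dist_of_mem (x := b) hat
    rw [dist_comm b a] at h
    linarith
  have hrcb : 3 * B + C + 1 ≤ dist c b := by
    have h := Metric.infDist_le_dist_of_mem (x := b) hct
    rw [dist_comm b c] at h
    linarith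
  have hrL : dist c b ≤ dist a c := by
    have h := hb.2 a hasmem
    rwa [dist_comm c a] at h
  -- parameters
  set u : ℝ := min (dist a c - dist c b) (dist a b - 2*B - C) with hudef
  set v : ℝ := dist a c - dist c b + 1/2 with hvdef
  have humin1 : u ≤ dist a c - dist c b := by rw [hudef]; exact min_le_left _ _
  have humin2 : u ≤ dist a b - 2*B - C := by rw [hudef]; exact min_le_right _ _
  have hu0 : 0 ≤ u := by
    rw [hudef]
    exact le_min (by linarith) (by linarith)
  have huL : u ≤ dist a c := by linarith [dist_nonneg (x := c) (y := b)]
  have huIcc : u ∈ Set.Icc (0:ℝ) (dist a c) := ⟨hu0, huL⟩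
  have hvIcc : v ∈ Set.Icc (0:ℝ) (dist a c) := by
    constructor
    · rw [hvdef]; linarith
    · rw [hvdef]; linarith
  have hLIcc : dist a c ∈ Set.Icc (0:ℝ) (dist a c) := ⟨dist_nonneg, le_rfl⟩
  have h0Icc : (0:ℝ) ∈ Set.Icc (0:ℝ) (dist a c) := ⟨le_rfl, dist_nonneg⟩
  -- key points on t
  set y' : X := g v with hy'def
  set x : X := g u with hxdef
  have hy't : y' ∈ t := by rw [hgim]; exact ⟨v, hvIcc, rfl⟩
  have hdy'c : dist y' c = dist c b - 1/2 := by
    have h := hgiso v hvIcc (dist a c) hLIcc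
    rw [hgL] at h
    rw [hy'def, h, abs_of_nonpos (by rw [hvdef]; linarith)]
    rw [hvdef]; ring
  have hdy'b : 3*B + C + 1 ≤ dist y' b := by
    have h := Metric.infDist_le_dist_of_mem (x := b) hy't
    rw [dist_comm b y'] at h
    linarith
  obtain ⟨p', hp'⟩ := hproj_ex y'
  -- the ball around c misses s, so the projection of y' is B-close to b
  have hballc : Metric.ball c (dist c b) ∩ s = ∅ := by
    rw [Set.eq_empty_iff_forall_notMem]
    rintro q ⟨hq1, hq2⟩
    rw [Metric.mem_ball, dist_comm q c] at hq1
    have h2 := hb.2 q hq2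
    linarith
  have hr0 : 0 < dist c b := by linarith
  have hdiam1 := hB c (dist c b) hballc
  have hmem1 : p' ∈ setProj s (Metric.ball c (dist c b)) := by
    simp only [setProj, Set.mem_iUnion]
    exact ⟨y', by rw [Metric.mem_ball, hdy'c]; linarith, hp'⟩
  have hmem2 : b ∈ setProj s (Metric.ball c (dist c b)) := by
    simp only [setProj, Set.mem_iUnion]
    exact ⟨c, by rw [Metric.mem_ball, dist_self]; exact hr0, hb⟩
  have hp'b : dist p' b < B :=
    lt_of_le_of_lt
      (Metric.dist_le_diam_of_mem (hsbdd.subset (hsetProj_sub _)) hmem1 hmem2) hdiam1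
  -- hence y' is far from s
  have hD' : 2*B + C + 1 < dist y' p' := by
    have h := dist_triangle y' p' b
    linarith
  -- the ball around y' of radius dist y' p' misses s
  have hbally' : Metric.ball y' (dist y' p') ∩ s = ∅ := by
    rw [Set.eq_empty_iff_forall_notMem]
    rintro q ⟨hq1, hq2⟩
    rw [Metric.mem_ball, dist_comm q y'] at hq1
    have h2 := hp'.2 q hq2
    linarith
  -- x is in that ball
  have hdxy : dist x y' ≤ 2*B + C + 1/2 := by
    have h := hgiso u huIcc v hvIcc
    have hkey : dist a c - dist c b - u ≤ 2*B + C := by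
      rcases min_cases (dist a c - dist c b) (dist a b - 2*B - C) with ⟨h1, h2⟩ | ⟨h1, h2⟩
      · rw [hudef, h1]; linarith
      · rw [hudef, h1]
        have htri : dist a c ≤ dist a b + dist c b := by
          have h3 := dist_triangle a b c
          rw [dist_comm b c] at h3
          linarith
        linarith
    have huv : u - v ≤ 0 := by rw [hvdef]; linarith
    rw [hxdef, hy'def, h, abs_of_nonpos huv]
    rw [hvdef]
    linarith
  obtain ⟨p, hp⟩ := hproj_ex x
  have hdiam2 := hB y' (dist y' p') hbally'
  have hmem3 : p ∈ setProj s (Metric.ball y' (dist y' p')) := by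
    simp only [setProj, Set.mem_iUnion]
    exact ⟨x, by rw [Metric.mem_ball]; linarith, hp⟩
  have hmem4 : p' ∈ setProj s (Metric.ball y' (dist y' p')) := by
    simp only [setProj, Set.mem_iUnion]
    exact ⟨y', by rw [Metric.mem_ball, dist_self]; linarith, hp'⟩
  have hpp' : dist p p' < B :=
    lt_of_le_of_lt
      (Metric.dist_le_diam_of_mem (hsbdd.subset (hsetProj_sub _)) hmem3 hmem4) hdiam2
  have hpb : dist p b < 2*B := by
    have h := dist_triangle p p' b
    linarith
  -- so p is within 2B of b, hence far along s from a
  have hap : dist a b - 2*B < dist a p := by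
    have h := dist_triangle a p b
    linarith
  -- but by (DD), p cannot be farther from a than u + C
  have haproj : a ∈ projSet s a := by
    refine ⟨hasmem, fun q hq => ?_⟩
    rw [dist_self]
    exact dist_nonneg
  have hDDap := hDD s a b ⟨f, hf0, hfL, hfiso, hfim⟩ x a p a hp haproj
  have hxa : dist x a = u := by
    have h := hgiso u huIcc 0 h0Icc
    rw [hg0] at h
    rw [hxdef, h, sub_zero, abs_of_nonneg hu0]
  rw [hxa, dist_comm p a] at hDDap
  -- contradiction
  linarith
end

section
/- In a δ-hyperbolic geodesic metric space, for every geodesic segment [a,b] there is a constant B = B(δ) such that [a,b] is B-contracting: every metric ball disjoint from [a,b] has nearest-point projection to [a,b] of diameter < B. -/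
def DeltaThin (X : Type*) [MetricSpace X] (δ : ℝ) : Prop :=
  ∀ (a b c : X) (sab sbc sca : Set X),
    GeodSeg sab a b → GeodSeg sbc b c → GeodSeg sca c a →
    ∀ p ∈ sab, Metric.infDist p (sbc ∪ sca) ≤ δ

open Set Metric

lemma geod_endpoints {X : Type*} [MetricSpace X] {s : Set X} {a b : X}
    (h : GeodSeg s a b) : a ∈ s ∧ b ∈ s := by
  obtain ⟨f, h0, hL, hf, rfl⟩ := h
  exact ⟨⟨0, ⟨le_refl _, dist_nonneg⟩, h0⟩, ⟨dist a b, ⟨dist_nonneg, le_refl _⟩, hL⟩⟩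

lemma geod_compact {X : Type*} [MetricSpace X] {s : Set X} {a b : X}
    (h : GeodSeg s a b) : IsCompact s := by
  obtain ⟨f, h0, hL, hf, rfl⟩ := h
  apply isCompact_Icc.image_of_continuousOn
  have hlip : LipschitzOnWith 1 f (Icc 0 (dist a b)) := by
    apply LipschitzOnWith.of_dist_le_mul
    intro u hu v hv
    rw [hf u hu v hv, NNReal.coe_one, one_mul, Real.dist_eq]
  exact hlip.continuousOn

lemma geod_add {X : Type*} [MetricSpace X] {s : Set X} {a b : X}
    (h : GeodSeg s a b) : ∀ y ∈ s, dist a y + dist y b = dist a b := by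
  obtain ⟨f, h0, hL, hf, rfl⟩ := h
  rintro y ⟨v, hv, rfl⟩
  have h1 := hf 0 ⟨le_refl _, dist_nonneg⟩ v hv
  have h2 := hf v hv (dist a b) ⟨dist_nonneg, le_refl _⟩
  rw [h0] at h1
  rw [hL] at h2
  rw [h1, h2, abs_of_nonpos (by linarith [hv.1]), abs_of_nonpos (by linarith [hv.2])]
  ring

lemma real_between {t1 t2 c : ℝ} (h0 : 0 ≤ c) (hc : c ≤ |t1 - t2|) :
    ∃ tu, min t1 t2 ≤ tu ∧ tu ≤ max t1 t2 ∧ |t1 - tu| = c ∧ |t2 - tu| = |t1 - t2| - c := by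
  rcases le_total t1 t2 with h | h
  · rw [abs_of_nonpos (by linarith)] at hc ⊢
    refine ⟨t1 + c, le_trans (min_le_left _ _) (by linarith), ?_, ?_, ?_⟩
    · rw [max_eq_right h]; linarith
    · have : t1 - (t1 + c) = -c := by ring
      rw [this, abs_neg, abs_of_nonneg h0]
    · rw [abs_of_nonneg (by linarith)]; ring
  · rw [abs_of_nonneg (by linarith)] at hc ⊢
    refine ⟨t1 - c, ?_, le_trans (by linarith) (le_max_left _ _), ?_, ?_⟩
    · rw [min_eq_right h]; linarith
    · rw [abs_of_nonneg (by linarith)]; ring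
    · rw [abs_of_nonpos (by linarith)]; ring

lemma sub_geod {X : Type*} [MetricSpace X] {f : ℝ → X} {L : ℝ}
    (hf : ∀ u ∈ Set.Icc (0:ℝ) L, ∀ v ∈ Set.Icc (0:ℝ) L, dist (f u) (f v) = |u - v|)
    {t1 t2 : ℝ} (h1 : t1 ∈ Set.Icc (0:ℝ) L) (h2 : t2 ∈ Set.Icc (0:ℝ) L) :
    GeodSeg (f '' Set.Icc (min t1 t2) (max t1 t2)) (f t1) (f t2) := by
  have hsub : Set.Icc (min t1 t2) (max t1 t2) ⊆ Set.Icc (0:ℝ) L :=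
    Set.Icc_subset_Icc (le_min h1.1 h2.1) (max_le h1.2 h2.2)
  have hd : dist (f t1) (f t2) = |t1 - t2| := hf t1 h1 t2 h2
  rcases le_total t1 t2 with h | h
  · have hd' : dist (f t1) (f t2) = t2 - t1 := by
      rw [hd, abs_of_nonpos (by linarith)]; ring
    refine ⟨fun u => f (t1 + u), by norm_num, ?_, ?_, ?_⟩
    · rw [hd']; congr 1; ring
    · intro u hu v hv
      rw [hd'] at hu hv
      have hu' : t1 + u ∈ Set.Icc (0:ℝ) L := ⟨by linarith [h1.1, hu.1], by linarith [h2.2, hu.2]⟩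
      have hv' : t1 + v ∈ Set.Icc (0:ℝ) L := ⟨by linarith [h1.1, hv.1], by linarith [h2.2, hv.2]⟩
      rw [hf _ hu' _ hv']
      congr 1; ring
    · rw [hd', min_eq_left h, max_eq_right h]
      rw [show (fun u => f (t1 + u)) = f ∘ (fun u => t1 + u) from rfl, Set.image_comp,
        Set.image_const_add_Icc]
      norm_num
  · have hd' : dist (f t1) (f t2) = t1 - t2 := by
      rw [hd, abs_of_nonneg (by linarith)]
    refine ⟨fun u => f (t1 - u), by norm_num, ?_, ?_, ?_⟩
    · rw [hd']; congr 1; ring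
    · intro u hu v hv
      rw [hd'] at hu hv
      have hu' : t1 - u ∈ Set.Icc (0:ℝ) L := ⟨by linarith [h2.1, hu.2], by linarith [h1.2, hu.1]⟩
      have hv' : t1 - v ∈ Set.Icc (0:ℝ) L := ⟨by linarith [h2.1, hv.2], by linarith [h1.2, hv.1]⟩
      rw [hf _ hu' _ hv']
      rw [abs_sub_comm]
      congr 1; ring
    · rw [hd', min_eq_right h, max_eq_left h]
      rw [show (fun u => f (t1 - u)) = f ∘ (fun u => t1 - u) from rfl, Set.image_comp,
        Set.image_const_sub_Icc]
      norm_num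

lemma projSet_nonempty {X : Type*} [MetricSpace X] {s : Set X} {a b : X}
    (h : GeodSeg s a b) (x : X) : ∃ p, p ∈ projSet s x := by
  obtain ⟨p, hp, hmin⟩ := (geod_compact h).exists_isMinOn ⟨a, (geod_endpoints h).1⟩
    ((continuous_const.dist continuous_id).continuousOn (s := s) (f := fun q => dist x q))
  exact ⟨p, hp, fun q hq => isMinOn_iff.mp hmin q hq⟩

lemma exists_close {X : Type*} [MetricSpace X] {g g' : Set X} {c d c' d' m : X} {δ : ℝ}
    (hg : GeodSeg g c d) (hg' : GeodSeg g' c' d') (h : Metric.infDist m (g ∪ g') ≤ δ) :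
    ∃ y ∈ g ∪ g', dist m y ≤ δ := by
  obtain ⟨y, hy, hd⟩ := ((geod_compact hg).union (geod_compact hg')).exists_infDist_eq_dist
    ⟨c, Or.inl (geod_endpoints hg).1⟩ m
  exact ⟨y, hy, by rw [← hd]; exact h⟩

/-- Quasi-ruler: for a projection p of x to a geodesic and any m on the geodesic,
the path x → p → m is 4δ-taut. -/
lemma lemB {X : Type*} [MetricSpace X] {δ : ℝ} (hδ : 0 ≤ δ)
    (hgeo : ∀ a b : X, ∃ s : Set X, GeodSeg s a b) (hthin : DeltaThin X δ)
    {s : Set X} {a b x p m : X} (hs : GeodSeg s a b)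
    (hp : p ∈ projSet s x) (hm : m ∈ s) :
    dist x p + dist p m ≤ dist x m + 4 * δ := by
  obtain ⟨f, h0, hL, hf, himg⟩ := hs
  have hpmem := hp.1
  rw [himg] at hpmem hm
  obtain ⟨t1, ht1, hpt⟩ := hpmem
  obtain ⟨t2, ht2, hmt⟩ := hm
  subst hpt hmt
  have hpm : dist (f t1) (f t2) = |t1 - t2| := hf t1 ht1 t2 ht2
  refine le_of_forall_pos_le_add fun η hη => ?_
  by_cases hc : |t1 - t2| ≤ 2*δ + η
  · have hxx : dist x (f t1) ≤ dist x (f t2) := hp.2 (f t2) (himg ▸ ⟨t2, ht2, rfl⟩)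
    linarith
  push_neg at hc
  obtain ⟨tu, htu1, htu2, htu3, htu4⟩ := real_between (t1 := t1) (t2 := t2)
    (c := 2*δ + η) (by linarith) (le_of_lt hc)
  have htuI : tu ∈ Set.Icc (0:ℝ) (dist a b) :=
    ⟨le_trans (le_min ht1.1 ht2.1) htu1, le_trans htu2 (max_le ht1.2 ht2.2)⟩
  have hsubgeod := sub_geod hf ht1 ht2
  have humem : f tu ∈ f '' Set.Icc (min t1 t2) (max t1 t2) := ⟨tu, ⟨htu1, htu2⟩, rfl⟩
  have husS : f tu ∈ s := himg ▸ ⟨tu, htuI, rfl⟩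
  have hpu : dist (f t1) (f tu) = 2*δ + η := by rw [hf t1 ht1 tu htuI]; exact htu3
  have hum : dist (f tu) (f t2) = |t1 - t2| - (2*δ + η) := by
    rw [dist_comm, hf t2 ht2 tu htuI]; exact htu4
  obtain ⟨g1, hg1⟩ := hgeo (f t2) x
  obtain ⟨g2, hg2⟩ := hgeo x (f t1)
  have hclose := hthin (f t1) (f t2) x _ g1 g2 hsubgeod hg1 hg2 (f tu) humem
  obtain ⟨y, hy, hyd⟩ := exists_close hg1 hg2 hclose
  have hmin := hp.2 (f tu) husS
  rcases hy with hy | hy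
  · -- y ∈ g1 : geodesic from (f t2) to x
    have hadd := geod_add hg1 y hy
    have h1 : dist x (f tu) ≤ dist x y + dist y (f tu) := dist_triangle _ _ _
    have h2 : dist y (f tu) ≤ δ := by rw [dist_comm]; exact hyd
    have h3 : dist (f t2) (f tu) ≤ dist (f t2) y + dist y (f tu) := dist_triangle _ _ _
    have h4 : dist (f t2) (f tu) = dist (f tu) (f t2) := dist_comm _ _
    have h5 : dist x y = dist y x := dist_comm _ _
    have h6 : dist (f t2) x = dist x (f t2) := dist_comm _ _
    linarith
  · -- y ∈ g2 : geodesic from x to (f t1)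
    have hadd := geod_add hg2 y hy
    have h1 : dist x (f tu) ≤ dist x y + dist y (f tu) := dist_triangle _ _ _
    have h2 : dist y (f tu) ≤ δ := by rw [dist_comm]; exact hyd
    have h3 : dist (f t1) (f tu) ≤ dist (f t1) y + dist y (f tu) := dist_triangle _ _ _
    have h4 : dist (f t1) y = dist y (f t1) := dist_comm _ _
    exfalso
    linarith

/-- Thin-quadrilateral estimate: if two projections are farther apart than 8δ,
then the path x → p → p' → x' is 4δ-taut. -/
lemma weakC {X : Type*} [MetricSpace X] {δ : ℝ} (hδ : 0 ≤ δ)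
    (hgeo : ∀ a b : X, ∃ s : Set X, GeodSeg s a b) (hthin : DeltaThin X δ)
    {s : Set X} {a b x x' p p' : X} (hs : GeodSeg s a b)
    (hp : p ∈ projSet s x) (hp' : p' ∈ projSet s x') (hbig : 8*δ < dist p p') :
    dist x p + dist x' p' ≤ dist x x' + 4 * δ := by
  obtain ⟨f, h0, hL, hf, himg⟩ := hs
  have hpmem := hp.1
  have hpmem' := hp'.1
  rw [himg] at hpmem hpmem'
  obtain ⟨t1, ht1, hpt⟩ := hpmem
  obtain ⟨t2, ht2, hpt'⟩ := hpmem'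
  subst hpt hpt'
  have hpp : dist (f t1) (f t2) = |t1 - t2| := hf t1 ht1 t2 ht2
  obtain ⟨tm, htm1, htm2, htm3, htm4⟩ := real_between (t1 := t1) (t2 := t2)
    (c := |t1 - t2| / 2) (by positivity) (by linarith [abs_nonneg (t1 - t2)])
  have htmI : tm ∈ Set.Icc (0:ℝ) (dist a b) :=
    ⟨le_trans (le_min ht1.1 ht2.1) htm1, le_trans htm2 (max_le ht1.2 ht2.2)⟩
  have hsubgeod := sub_geod hf ht1 ht2
  have hmmem : f tm ∈ f '' Set.Icc (min t1 t2) (max t1 t2) := ⟨tm, ⟨htm1, htm2⟩, rfl⟩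
  have hmS : f tm ∈ s := himg ▸ ⟨tm, htmI, rfl⟩
  have hpm : dist (f t1) (f tm) = |t1 - t2| / 2 := by rw [hf t1 ht1 tm htmI]; exact htm3
  have hp'm : dist (f t2) (f tm) = |t1 - t2| / 2 := by
    rw [hf t2 ht2 tm htmI, htm4]; ring
  obtain ⟨g1, hg1⟩ := hgeo (f t2) x
  obtain ⟨g2, hg2⟩ := hgeo x (f t1)
  have hclose := hthin (f t1) (f t2) x _ g1 g2 hsubgeod hg1 hg2 (f tm) hmmem
  obtain ⟨y, hy, hyd⟩ := exists_close hg1 hg2 hclose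
  have hminx := hp.2 (f tm) hmS
  have hminx' := hp'.2 (f tm) hmS
  rcases hy with hy | hy
  · -- y ∈ g1 : geodesic from p' = f t2 to x ; use the second triangle (p', x, x')
    obtain ⟨g3, hg3⟩ := hgeo x x'
    obtain ⟨g4, hg4⟩ := hgeo x' (f t2)
    have hclose2 := hthin (f t2) x x' g1 g3 g4 hg1 hg3 hg4 y hy
    obtain ⟨y', hy', hyd'⟩ := exists_close hg3 hg4 hclose2
    have hmy' : dist (f tm) y' ≤ 2*δ :=
      le_trans (dist_triangle _ y _) (by linarith)
    rcases hy' with hy' | hy'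
    · -- y' ∈ g3 : geodesic from x to x'
      have hadd := geod_add hg3 y' hy'
      have h1 : dist x (f tm) ≤ dist x y' + dist y' (f tm) := dist_triangle _ _ _
      have h2 : dist x' (f tm) ≤ dist x' y' + dist y' (f tm) := dist_triangle _ _ _
      have h3 : dist y' (f tm) = dist (f tm) y' := dist_comm _ _
      have h4 : dist x' y' = dist y' x' := dist_comm _ _
      linarith
    · -- y' ∈ g4 : geodesic from x' to p' = f t2
      have hadd := geod_add hg4 y' hy'
      have h1 : dist x' (f tm) ≤ dist x' y' + dist y' (f tm) := dist_triangle _ _ _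
      have h2 : dist y' (f tm) = dist (f tm) y' := dist_comm _ _
      have h3 : dist (f t2) (f tm) ≤ dist (f t2) y' + dist y' (f tm) := dist_triangle _ _ _
      have h4 : dist (f t2) y' = dist y' (f t2) := dist_comm _ _
      exfalso
      linarith
  · -- y ∈ g2 : geodesic from x to p = f t1
    have hadd := geod_add hg2 y hy
    have h1 : dist x (f tm) ≤ dist x y + dist y (f tm) := dist_triangle _ _ _
    have h2 : dist y (f tm) ≤ δ := by rw [dist_comm]; exact hyd
    have h3 : dist (f t1) (f tm) ≤ dist (f t1) y + dist y (f tm) := dist_triangle _ _ _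
    have h4 : dist (f t1) y = dist y (f t1) := dist_comm _ _
    exfalso
    linarith

theorem stmt15 {X : Type*} [MetricSpace X] (δ : ℝ) (hδ : 0 ≤ δ)
    (hgeo : ∀ a b : X, ∃ s : Set X, GeodSeg s a b)
    (hthin : DeltaThin X δ) :
    ∃ B : ℝ, ∀ (s : Set X) (a b : X), GeodSeg s a b → Contracting B s := by
  refine ⟨16*δ + 1, fun s a b hs => ?_⟩
  intro z r hdisj
  obtain ⟨q, hq⟩ := projSet_nonempty hs z
  have hq_far : r ≤ dist z q := by
    by_contra h
    have hmem : q ∈ Metric.ball z r ∩ s :=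
      ⟨by rw [Metric.mem_ball, dist_comm]; linarith, hq.1⟩
    rw [hdisj] at hmem
    exact hmem
  have key : ∀ x ∈ Metric.ball z r, ∀ p ∈ projSet s x, dist p q ≤ 8*δ := by
    intro x hx p hp
    have hxz : dist x z < r := Metric.mem_ball.mp hx
    by_cases h8 : 8*δ < dist p q
    · have hw := weakC hδ hgeo hthin hs hp hq h8
      have hcomm : dist x z = dist z x := dist_comm _ _
      have hxp : dist x p ≤ 4*δ := by linarith
      have hB := lemB hδ hgeo hthin hs hq hp.1
      have htri : dist z p ≤ dist z x + dist x p := dist_triangle _ _ _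
      have hqp : dist p q = dist q p := dist_comm _ _
      linarith
    · linarith
  have hdiam : ∀ p ∈ setProj s (Metric.ball z r), ∀ p' ∈ setProj s (Metric.ball z r),
      dist p p' ≤ 16*δ := by
    intro p hp p' hp'
    simp only [setProj, Set.mem_iUnion] at hp hp'
    obtain ⟨x, hx, hpx⟩ := hp
    obtain ⟨x', hx', hpx'⟩ := hp'
    have h1 := key x hx p hpx
    have h2 := key x' hx' p' hpx'
    calc dist p p' ≤ dist p q + dist q p' := dist_triangle _ _ _
      _ ≤ 16*δ := by rw [dist_comm q p']; linarith
  have hfin := Metric.diam_le_of_forall_dist_le (by linarith : (0:ℝ) ≤ 16*δ) hdiam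
  linarith
end

section
/- Let α be a piecewise geodesic path with vertices a₀,…,a_k in which two consecutive segments [a_{i−1},a_i], [a_i,a_{i+1}] are both non-expressways; replacing them by the single geodesic [a_{i−1},a_{i+1}] does not increase modified length. Consequently, for any a, b the infimum λ(a,b) of modified lengths over all piecewise geodesic paths from a to b equals the infimum over admissible paths, and λ satisfies: λ(a,b) ≤ d(a,b), the triangle inequality λ(a,c) ≤ λ(a,b) + λ(b,c), and |λ(a,b) − λ(a',b')| ≤ d(a,a') + d(b,b'). -/
structure PGPath (X : Type*) [MetricSpace X] (a b : X) where
  k : ℕ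
  v : ℕ → X
  seg : ℕ → Set X
  hv0 : v 0 = a
  hvk : v k = b
  hseg : ∀ i < k, GeodSeg (seg i) (v i) (v (i + 1))

open scoped Classical in
noncomputable def mlen {X : Type*} [MetricSpace X] {a b : X}
    (E : Set (Set X)) (p : PGPath X a b) : ℝ :=
  (∑ i ∈ Finset.range p.k, dist (p.v i) (p.v (i + 1))) -
    (((Finset.range p.k).filter (fun i => p.seg i ∈ E)).card : ℝ)

def Admissible {X : Type*} [MetricSpace X] {a b : X}
    (E : Set (Set X)) (p : PGPath X a b) : Prop :=
  ∀ i : ℕ, i + 1 < p.k → p.seg i ∈ E ∨ p.seg (i + 1) ∈ E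

noncomputable def lam {X : Type*} [MetricSpace X] (E : Set (Set X)) (a b : X) : ℝ :=
  sInf {m : ℝ | ∃ p : PGPath X a b, Admissible E p ∧ mlen E p = m}

/-! Replacing two consecutive non-expressways `[aᵢ₋₁, aᵢ]`, `[aᵢ, aᵢ₊₁]` by a geodesic
`[aᵢ₋₁, aᵢ₊₁]` removes one segment and, by the triangle inequality, does not increase the
modified length; iterating this makes any path admissible without increasing its modified length,
so both infima agree. Since expressways have length `L ≥ 1`, every segment has nonnegative
modified length, so these infima are genuine infima of sets bounded below (not the junk value
`sInf` takes on unbounded sets). Modified length is additive under concatenation, which gives the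
triangle inequality; the one-segment path gives `λ ≤ d`; the Lipschitz bound follows from both. -/

theorem GeodSeg.diam_eq {X : Type*} [MetricSpace X] {s : Set X} {a b : X}
    (h : GeodSeg s a b) : Metric.diam s = dist a b := by
  obtain ⟨f, hfa, hfb, hiso, rfl⟩ := h
  have hbound : ∀ x ∈ f '' Set.Icc 0 (dist a b), ∀ y ∈ f '' Set.Icc 0 (dist a b),
      dist x y ≤ dist a b := by
    rintro _ ⟨u, hu, rfl⟩ _ ⟨w, hw, rfl⟩
    rw [hiso u hu w hw, abs_sub_le_iff]
    constructor <;> linarith [hu.1, hu.2, hw.1, hw.2]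
  have hmem : ∀ t ∈ Set.Icc 0 (dist a b), f t ∈ f '' Set.Icc 0 (dist a b) :=
    fun t ht => Set.mem_image_of_mem f ht
  refine le_antisymm (Metric.diam_le_of_forall_dist_le dist_nonneg hbound) ?_
  have ha := hfa ▸ hmem 0 ⟨le_rfl, dist_nonneg⟩
  have hb := hfb ▸ hmem (dist a b) ⟨dist_nonneg, le_rfl⟩
  exact Metric.dist_le_diam_of_mem (Metric.isBounded_iff.2 ⟨_, hbound⟩) ha hb

theorem GeodSeg.dist_eq {X : Type*} [MetricSpace X] {s : Set X} {a b a' b' : X}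
    (h : GeodSeg s a b) (h' : GeodSeg s a' b') : dist a b = dist a' b' := by
  rw [← h.diam_eq, ← h'.diam_eq]

namespace PGPath

def splice {α : Type*} (n : ℕ) (f g : ℕ → α) (j : ℕ) : α :=
  if j < n then f j else g (j - n)

section splice

variable {α : Type*} {n j : ℕ} {f g : ℕ → α}

theorem splice_of_lt (hj : j < n) : splice n f g j = f j := if_pos hj

theorem splice_add : splice n f g (n + j) = g j := by
  simp [splice]

theorem splice_of_le (hfg : f n = g 0) (hj : j ≤ n) : splice n f g j = f j := by
  rcases hj.lt_or_eq with hj | rfl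
  · exact splice_of_lt hj
  · simpa using (splice_add (j := 0)).trans hfg.symm

end splice

variable {X : Type*} [MetricSpace X] {a b c : X}

open scoped Classical in
noncomputable def segMlen (E : Set (Set X)) (p : PGPath X a b) (i : ℕ) : ℝ :=
  dist (p.v i) (p.v (i + 1)) - if p.seg i ∈ E then 1 else 0

theorem mlen_eq_sum_segMlen (E : Set (Set X)) (p : PGPath X a b) :
    mlen E p = ∑ i ∈ Finset.range p.k, p.segMlen E i := by
  unfold segMlen
  rw [Finset.sum_sub_distrib, Finset.sum_boole, mlen]

theorem segMlen_le_dist (p : PGPath X a b) (E : Set (Set X)) (i : ℕ) :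
    p.segMlen E i ≤ dist (p.v i) (p.v (i + 1)) := by
  unfold segMlen
  split_ifs <;> norm_num

theorem segMlen_nonneg {E : Set (Set X)}
    (hE : ∀ s ∈ E, ∃ u v : X, GeodSeg s u v ∧ 1 ≤ dist u v)
    (p : PGPath X a b) {i : ℕ} (hi : i < p.k) : 0 ≤ p.segMlen E i := by
  unfold segMlen
  split_ifs with hs
  · obtain ⟨u, v, huv, hL⟩ := hE _ hs
    linarith [(p.hseg i hi).dist_eq huv]
  · simp

theorem mlen_nonneg {E : Set (Set X)}
    (hE : ∀ s ∈ E, ∃ u v : X, GeodSeg s u v ∧ 1 ≤ dist u v) (p : PGPath X a b) :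
    0 ≤ mlen E p := by
  rw [mlen_eq_sum_segMlen]
  exact Finset.sum_nonneg fun i hi => p.segMlen_nonneg hE (Finset.mem_range.1 hi)

def ofGeodSeg {s : Set X} (hs : GeodSeg s a b) : PGPath X a b where
  k := 1
  v j := if j = 0 then a else b
  seg _ := s
  hv0 := rfl
  hvk := rfl
  hseg i hi := by
    obtain rfl : i = 0 := by omega
    exact hs

theorem admissible_ofGeodSeg (E : Set (Set X)) {s : Set X} (hs : GeodSeg s a b) :
    Admissible E (ofGeodSeg hs) :=
  fun i hi => absurd hi (by simp [ofGeodSeg])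

theorem mlen_ofGeodSeg_le (E : Set (Set X)) {s : Set X} (hs : GeodSeg s a b) :
    mlen E (ofGeodSeg hs) ≤ dist a b := by
  rw [mlen_eq_sum_segMlen]
  exact (Finset.sum_range_one _).trans_le ((ofGeodSeg hs).segMlen_le_dist E 0)

def take (p : PGPath X a b) (n : ℕ) (hn : n ≤ p.k) : PGPath X a (p.v n) where
  k := n
  v := p.v
  seg := p.seg
  hv0 := p.hv0
  hvk := rfl
  hseg i hi := p.hseg i (by omega)

def drop (p : PGPath X a b) (n : ℕ) (hn : n ≤ p.k) : PGPath X (p.v n) b where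
  k := p.k - n
  v j := p.v (n + j)
  seg j := p.seg (n + j)
  hv0 := rfl
  hvk := by rw [Nat.add_sub_cancel' hn, p.hvk]
  hseg j hj := p.hseg (n + j) (by omega)

theorem mlen_take (E : Set (Set X)) (p : PGPath X a b) (n : ℕ) (hn : n ≤ p.k) :
    mlen E (p.take n hn) = ∑ j ∈ Finset.range n, p.segMlen E j :=
  mlen_eq_sum_segMlen E _

theorem mlen_take_add_mlen_drop (E : Set (Set X)) (p : PGPath X a b) (n : ℕ) (hn : n ≤ p.k) :
    mlen E (p.take n hn) + mlen E (p.drop n hn) = mlen E p := by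
  rw [mlen_take, mlen_eq_sum_segMlen, mlen_eq_sum_segMlen,
    show p.k = n + (p.k - n) by omega, Finset.sum_range_add]
  rfl

def append (p : PGPath X a b) (q : PGPath X b c) : PGPath X a c where
  k := p.k + q.k
  v := splice p.k p.v q.v
  seg := splice p.k p.seg q.seg
  hv0 := (splice_of_le (p.hvk.trans q.hv0.symm) (Nat.zero_le _)).trans p.hv0
  hvk := splice_add.trans q.hvk
  hseg j hj := by
    rcases lt_or_ge j p.k with hj' | hj'
    · rw [splice_of_lt hj', splice_of_le (p.hvk.trans q.hv0.symm) hj'.le,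
        splice_of_le (p.hvk.trans q.hv0.symm) hj']
      exact p.hseg j hj'
    · obtain ⟨t, rfl⟩ := Nat.exists_eq_add_of_le hj'
      rw [splice_add, splice_add, add_assoc, splice_add]
      exact q.hseg t (by omega)

section append

variable (p : PGPath X a b) (q : PGPath X b c) {j : ℕ}

theorem append_v_of_le (hj : j ≤ p.k) : (p.append q).v j = p.v j :=
  splice_of_le (p.hvk.trans q.hv0.symm) hj

theorem append_v_add : (p.append q).v (p.k + j) = q.v j := splice_add

theorem append_seg_of_lt (hj : j < p.k) : (p.append q).seg j = p.seg j := splice_of_lt hj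

theorem append_seg_add : (p.append q).seg (p.k + j) = q.seg j := splice_add

theorem segMlen_append_of_lt (E : Set (Set X)) (hj : j < p.k) :
    (p.append q).segMlen E j = p.segMlen E j := by
  rw [segMlen, append_v_of_le p q hj.le, append_v_of_le p q hj, append_seg_of_lt p q hj, segMlen]

theorem segMlen_append_add (E : Set (Set X)) :
    (p.append q).segMlen E (p.k + j) = q.segMlen E j := by
  rw [segMlen, add_assoc, append_v_add, append_v_add, append_seg_add, segMlen]

theorem mlen_append (E : Set (Set X)) : mlen E (p.append q) = mlen E p + mlen E q := by
  rw [mlen_eq_sum_segMlen, mlen_eq_sum_segMlen, mlen_eq_sum_segMlen]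
  refine (Finset.sum_range_add _ p.k q.k).trans (congrArg₂ (· + ·) ?_ ?_)
  · exact Finset.sum_congr rfl fun j hj => segMlen_append_of_lt p q E (Finset.mem_range.1 hj)
  · exact Finset.sum_congr rfl fun t _ => segMlen_append_add p q E

end append

theorem segMlen_of_notMem {E : Set (Set X)} (p : PGPath X a b) {i : ℕ} (h : p.seg i ∉ E) :
    p.segMlen E i = dist (p.v i) (p.v (i + 1)) := by
  simp [segMlen, h]

def shortcut (p : PGPath X a b) {i : ℕ} (hi : i + 1 < p.k) {s : Set X}
    (hs : GeodSeg s (p.v i) (p.v (i + 2))) : PGPath X a b :=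
  ((p.take i (by omega)).append (ofGeodSeg hs)).append (p.drop (i + 2) hi)

section shortcut

variable (p : PGPath X a b) {i : ℕ} (hi : i + 1 < p.k) {s : Set X}
  (hs : GeodSeg s (p.v i) (p.v (i + 2)))

theorem k_shortcut : (p.shortcut hi hs).k + 1 = p.k := by
  change i + 1 + (p.k - (i + 2)) + 1 = p.k
  omega

theorem mlen_shortcut_le {E : Set (Set X)} (h₁ : p.seg i ∉ E) (h₂ : p.seg (i + 1) ∉ E) :
    mlen E (p.shortcut hi hs) ≤ mlen E p := by
  have htake : mlen E (p.take (i + 2) hi) = mlen E (p.take i (by omega)) +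
      dist (p.v i) (p.v (i + 1)) + dist (p.v (i + 1)) (p.v (i + 2)) := by
    rw [mlen_take, mlen_take, Finset.sum_range_succ, Finset.sum_range_succ]
    exact congrArg₂ (· + ·) (congrArg₂ (· + ·) rfl (p.segMlen_of_notMem h₁))
      (p.segMlen_of_notMem h₂)
  rw [shortcut, mlen_append, mlen_append, ← mlen_take_add_mlen_drop E p (i + 2) hi, htake]
  linarith [mlen_ofGeodSeg_le E hs, dist_triangle (p.v i) (p.v (i + 1)) (p.v (i + 2))]

end shortcut

theorem exists_shorter_mlen_le (hgeo : ∀ a b : X, ∃ s : Set X, GeodSeg s a b)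
    {E : Set (Set X)} (p : PGPath X a b) {i : ℕ} (hi : i + 1 < p.k)
    (h₁ : p.seg i ∉ E) (h₂ : p.seg (i + 1) ∉ E) :
    ∃ p' : PGPath X a b, p'.k + 1 = p.k ∧ mlen E p' ≤ mlen E p :=
  have ⟨_, hs⟩ := hgeo (p.v i) (p.v (i + 2))
  ⟨p.shortcut hi hs, p.k_shortcut hi hs, p.mlen_shortcut_le hi hs h₁ h₂⟩

theorem exists_admissible_mlen_le (hgeo : ∀ a b : X, ∃ s : Set X, GeodSeg s a b)
    (E : Set (Set X)) (p : PGPath X a b) :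
    ∃ q : PGPath X a b, Admissible E q ∧ mlen E q ≤ mlen E p := by
  induction hk : p.k using Nat.strong_induction_on generalizing p with
  | _ n ih =>
  by_cases hp : Admissible E p
  · exact ⟨p, hp, le_rfl⟩
  · obtain ⟨i, hi, h₁, h₂⟩ : ∃ i, i + 1 < p.k ∧ p.seg i ∉ E ∧ p.seg (i + 1) ∉ E := by
      simpa [Admissible] using hp
    obtain ⟨p', hk', hle⟩ := exists_shorter_mlen_le hgeo p hi h₁ h₂
    obtain ⟨q, hq, hqle⟩ := ih p'.k (by omega) p' rfl
    exact ⟨q, hq, hqle.trans hle⟩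

end PGPath

open PGPath

section lam

variable {X : Type*} [MetricSpace X] (hgeo : ∀ a b : X, ∃ s : Set X, GeodSeg s a b)
  {E : Set (Set X)} (hE : ∀ s ∈ E, ∃ u v : X, GeodSeg s u v ∧ 1 ≤ dist u v)

include hgeo in
theorem nonempty_admissible_mlen (a b : X) :
    {m : ℝ | ∃ p : PGPath X a b, Admissible E p ∧ mlen E p = m}.Nonempty :=
  have ⟨_, hs⟩ := hgeo a b
  ⟨_, ofGeodSeg hs, admissible_ofGeodSeg E hs, rfl⟩

include hgeo in
theorem nonempty_mlen (a b : X) : {m : ℝ | ∃ p : PGPath X a b, mlen E p = m}.Nonempty :=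
  have ⟨_, hs⟩ := hgeo a b
  ⟨_, ofGeodSeg hs, rfl⟩

include hE in
theorem bddBelow_mlen (a b : X) : BddBelow {m : ℝ | ∃ p : PGPath X a b, mlen E p = m} :=
  ⟨0, by rintro _ ⟨p, rfl⟩; exact mlen_nonneg hE p⟩

theorem admissible_mlen_subset (a b : X) :
    {m : ℝ | ∃ p : PGPath X a b, Admissible E p ∧ mlen E p = m} ⊆
      {m : ℝ | ∃ p : PGPath X a b, mlen E p = m} := by
  rintro _ ⟨p, -, rfl⟩
  exact ⟨p, rfl⟩

include hE in
theorem bddBelow_admissible_mlen (a b : X) :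
    BddBelow {m : ℝ | ∃ p : PGPath X a b, Admissible E p ∧ mlen E p = m} :=
  (bddBelow_mlen hE a b).mono (admissible_mlen_subset a b)

include hgeo hE in
theorem lam_eq_sInf_mlen (a b : X) :
    lam E a b = sInf {m : ℝ | ∃ p : PGPath X a b, mlen E p = m} := by
  refine le_antisymm (le_csInf (nonempty_mlen hgeo a b) ?_)
    (csInf_le_csInf (bddBelow_mlen hE a b) (nonempty_admissible_mlen hgeo a b)
      (admissible_mlen_subset a b))
  rintro _ ⟨p, rfl⟩
  obtain ⟨q, hq, hle⟩ := exists_admissible_mlen_le hgeo E p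
  exact (csInf_le (bddBelow_admissible_mlen hE a b) ⟨q, hq, rfl⟩).trans hle

include hgeo hE in
theorem lam_le_dist (a b : X) : lam E a b ≤ dist a b :=
  have ⟨_, hs⟩ := hgeo a b
  (csInf_le (bddBelow_admissible_mlen hE a b) ⟨ofGeodSeg hs, admissible_ofGeodSeg E hs, rfl⟩).trans
    (mlen_ofGeodSeg_le E hs)

include hgeo hE in
theorem lam_le_add (a b c : X) : lam E a c ≤ lam E a b + lam E b c := by
  rw [lam_eq_sInf_mlen hgeo hE, lam_eq_sInf_mlen hgeo hE, lam_eq_sInf_mlen hgeo hE,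
    ← csInf_add (nonempty_mlen hgeo a b) (bddBelow_mlen hE a b) (nonempty_mlen hgeo b c)
      (bddBelow_mlen hE b c)]
  refine csInf_le_csInf (bddBelow_mlen hE a c)
    ((nonempty_mlen hgeo a b).add (nonempty_mlen hgeo b c)) ?_
  rintro _ ⟨_, ⟨p, rfl⟩, _, ⟨q, rfl⟩, rfl⟩
  exact ⟨p.append q, mlen_append p q E⟩

include hgeo hE in
theorem abs_lam_sub_lam_le (a b a' b' : X) :
    |lam E a b - lam E a' b'| ≤ dist a a' + dist b b' := by
  have key : ∀ a b a' b' : X, lam E a b ≤ dist a a' + lam E a' b' + dist b b' := fun a b a' b' => by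
    linarith [lam_le_add hgeo hE a a' b, lam_le_add hgeo hE a' b' b, lam_le_dist hgeo hE a a',
      lam_le_dist hgeo hE b' b, dist_comm b' b]
  rw [abs_sub_le_iff]
  constructor <;> linarith [key a b a' b', key a' b' a b, dist_comm a a', dist_comm b b']

end lam

theorem stmt17 {X : Type*} [MetricSpace X]
    (hgeo : ∀ a b : X, ∃ s : Set X, GeodSeg s a b)
    (E : Set (Set X)) (L : ℝ) (hL : 1 ≤ L)
    (hE : ∀ s ∈ E, ∃ u v : X, GeodSeg s u v ∧ dist u v = L) :
    (∀ (a b : X) (p : PGPath X a b) (i : ℕ), i + 1 < p.k →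
      p.seg i ∉ E → p.seg (i + 1) ∉ E →
      ∃ p' : PGPath X a b, p'.k + 1 = p.k ∧ mlen E p' ≤ mlen E p) ∧
    (∀ a b : X, lam E a b = sInf {m : ℝ | ∃ p : PGPath X a b, mlen E p = m}) ∧
    (∀ a b : X, lam E a b ≤ dist a b) ∧
    (∀ a b c : X, lam E a c ≤ lam E a b + lam E b c) ∧
    (∀ a b a' b' : X, |lam E a b - lam E a' b'| ≤ dist a a' + dist b b') := by
  have hE₁ : ∀ s ∈ E, ∃ u v : X, GeodSeg s u v ∧ 1 ≤ dist u v := fun s hs =>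
    have ⟨u, v, huv, hL'⟩ := hE s hs
    ⟨u, v, huv, hL'.symm ▸ hL⟩
  exact ⟨fun _ _ p _ hi => exists_shorter_mlen_le hgeo p hi, lam_eq_sInf_mlen hgeo hE₁,
    lam_le_dist hgeo hE₁, lam_le_add hgeo hE₁, abs_lam_sub_lam_le hgeo hE₁⟩
end
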